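/- Let Z_1,…,Z_n be i.i.d. negative binomial random variables with ℙ[Z_1 = r] = (nθ/(2m+nθ))^θ ((2m)/(2m+nθ))^r θ^{(r)}/r! for r ∈ ℕ₀, where θ > 0 and n ≤ m ≤ n³. Then ℙ[Σ_{i=1}^n Z_i = 2m] ≥ C n^{-5/2} for a constant C > 0 depending only on θ. -/

import Mathlib

open Finset Nat

/-- Rising factorial `θ^{(r)}` for real `θ`. -/
noncomputable def riseR (x : ℝ) (k : ℕ) : ℝ := ∏ i ∈ Finset.range k, (x + i)

/-- Mass function of the negative binomial distribution appearing in the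
configuration model: `ℙ[Z = r] = (nθ/(2m+nθ))^θ (2m/(2m+nθ))^r θ^{(r)}/r!`. -/
noncomputable def nbMass (θ : ℝ) (n m : ℕ) (r : ℕ) : ℝ :=
  ((n * θ) / (2 * m + n * θ)) ^ θ * ((2 * m : ℝ) / (2 * m + n * θ)) ^ r *
    riseR θ r / (r ! : ℝ)


/-!
The sum of `n` i.i.d. negative binomial variables of shape `θ` is negative binomial of shape
`a = nθ` (Chu–Vandermonde for `Ring.multichoose`), so the probability in question is the mass
`(a/(a+M))^a (M/(a+M))^M a^{(M)}/M!` of a negative binomial law at its mean `M = 2m`.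
For an integer shape `b` this mass is `b/(b+M)` times `(b/(b+M))^b (M/(b+M))^M (b+M).choose b`,
and Stirling's bounds on the three factorials give at least `√(2π)/e² · √(b/(M(b+M)))`.
A real shape `a` is compared with `b = ⌈a⌉` at the cost of a factor `exp(1 + 2/a)`, using
`1 + t ≤ eᵗ` and the integral bound on `∑ 1/(a+i)`. Finally `a = nθ ≥ θ` and `M(a+M) = O(n⁶)`
give `√(a/(M(a+M))) ≳ n^{-5/2}`.
-/

open Real

theorem riseR_pos {x : ℝ} (hx : 0 < x) (k : ℕ) : 0 < riseR x k :=
  prod_pos fun i _ => by positivity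

theorem riseR_eq_ascPochhammer_eval (x : ℝ) (k : ℕ) :
    riseR x k = (ascPochhammer ℝ k).eval x := by
  induction k with
  | zero => simp [riseR]
  | succ k ih => rw [riseR, prod_range_succ, ← riseR, ih, ascPochhammer_succ_eval]

theorem riseR_div_factorial (x : ℝ) (k : ℕ) : riseR x k / k ! = Ring.multichoose x k := by
  rw [div_eq_iff (by positivity), riseR_eq_ascPochhammer_eval,
    ← Polynomial.ascPochhammer_smeval_eq_eval,
    ← Ring.factorial_nsmul_multichoose_eq_ascPochhammer, nsmul_eq_mul, mul_comm]

theorem Ring.multichoose_add {R : Type*} [CommRing R] [BinomialRing R] (r s : R) (k : ℕ) :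
    Ring.multichoose (r + s) k =
      ∑ ij ∈ antidiagonal k, Ring.multichoose r ij.1 * Ring.multichoose s ij.2 := by
  have h := Ring.add_choose_eq (r := -r) (s := -s) k (Commute.all _ _)
  rw [← neg_add, Ring.choose_neg'] at h
  simp only [Ring.choose_neg', smul_mul_smul_comm] at h
  have h2 : ∀ ij ∈ antidiagonal k, ((ij.1 : ℤ).negOnePow * (ij.2 : ℤ).negOnePow) •
      (Ring.multichoose r ij.1 * Ring.multichoose s ij.2) =
      (k : ℤ).negOnePow • (Ring.multichoose r ij.1 * Ring.multichoose s ij.2) := by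
    intro ij hij
    rw [← Int.negOnePow_add, ← Nat.cast_add, mem_antidiagonal.mp hij]
  rw [sum_congr rfl h2, ← smul_sum] at h
  simpa using h

theorem Finset.sum_finAntidiagonal_succ {β : Type*} [AddCommMonoid β] {d M : ℕ}
    (F : (Fin (d + 1) → ℕ) → β) :
    ∑ z ∈ finAntidiagonal (d + 1) M, F z =
      ∑ p ∈ antidiagonal M, ∑ g ∈ finAntidiagonal d p.2, F (Fin.cons p.1 g) := by
  rw [finAntidiagonal, finAntidiagonal.aux, sum_disjiUnion]
  simp only [sum_map]
  rfl

theorem Ring.sum_finAntidiagonal_prod_multichoose {R : Type*} [CommRing R] [BinomialRing R]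
    {d : ℕ} (x : Fin d → R) (M : ℕ) :
    ∑ z ∈ finAntidiagonal d M, ∏ i, Ring.multichoose (x i) (z i) =
      Ring.multichoose (∑ i, x i) M := by
  induction d generalizing M with
  | zero => rcases M with _ | M <;> simp [finAntidiagonal, finAntidiagonal.aux]
  | succ d ih =>
    simp only [sum_finAntidiagonal_succ, Fin.prod_univ_succ, Fin.cons_zero, Fin.cons_succ,
      ← mul_sum, ih, Fin.sum_univ_succ, multichoose_add]

theorem riseR_natCast_div_factorial {b M : ℕ} (hb : b ≠ 0) :
    riseR b M / M ! = b / (b + M) * ((b + M).choose b : ℝ) := by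
  obtain ⟨c, rfl⟩ : ∃ c, b = c + 1 := ⟨b - 1, by omega⟩
  have h : (c ! : ℝ) * riseR (c + 1) M = (c + M)! := by
    rw [← Nat.factorial_mul_ascFactorial c M, Nat.ascFactorial_eq_prod_range, riseR]
    push_cast
    rfl
  rw [Nat.cast_add_choose, show c + 1 + M = c + M + 1 by ring, Nat.factorial_succ (c + M),
    Nat.factorial_succ c]
  push_cast
  rw [← h]
  field_simp
  ring

theorem riseR_le_riseR_mul_exp {a b : ℝ} (ha : 0 < a) (hb : 0 ≤ b) (M : ℕ) :
    riseR b M ≤ riseR a M * exp ((b - a) * ∑ i ∈ range M, (a + i)⁻¹) := by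
  rw [mul_sum, exp_sum, riseR, riseR, ← prod_mul_distrib]
  refine prod_le_prod (fun i _ => by positivity) fun i _ => ?_
  have hai : 0 < a + i := by positivity
  calc b + i = (a + i) * ((b - a) * (a + i)⁻¹ + 1) := by field_simp; ring
    _ ≤ (a + i) * exp ((b - a) * (a + i)⁻¹) := by gcongr; exact add_one_le_exp _

theorem sum_range_inv_add_le {a : ℝ} (ha : 0 < a) (M : ℕ) :
    ∑ i ∈ range M, (a + i)⁻¹ ≤ a⁻¹ + log ((a + M) / a) := by
  rcases M with _ | M
  · simp [ha.le]
  have hanti : AntitoneOn (fun x : ℝ => x⁻¹) (Set.Icc a (a + M)) :=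
    fun x hx y _ hxy => inv_anti₀ (ha.trans_le hx.1) hxy
  have h := hanti.sum_le_integral
  rw [integral_inv_of_pos ha (by positivity)] at h
  have hlog : log ((a + M) / a) ≤ log ((a + M + 1) / a) :=
    log_le_log (by positivity) (div_le_div_of_nonneg_right (by linarith) ha.le)
  rw [sum_range_succ']
  push_cast at h ⊢
  simp only [← add_assoc, add_zero] at h ⊢
  linarith

theorem rpow_mul_riseR_le {a b : ℝ} (ha : 0 < a) (hab : a ≤ b) (hba : b ≤ a + 1) (M : ℕ) :
    (b / (b + M)) ^ b * riseR b M ≤ exp (1 + 2 / a) * ((a / (a + M)) ^ a * riseR a M) := by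
  have hb : 0 < b := ha.trans_le hab
  set r := a / (a + M) with hr
  have hr0 : 0 < r := by positivity
  have hrise : riseR b M ≤ riseR a M * (exp ((b - a) / a) * r⁻¹ ^ (b - a)) := by
    refine (riseR_le_riseR_mul_exp ha hb.le M).trans
      (mul_le_mul_of_nonneg_left ?_ (riseR_pos ha M).le)
    rw [rpow_def_of_pos (inv_pos.mpr hr0), ← exp_add, hr, inv_div, exp_le_exp]
    exact (mul_le_mul_of_nonneg_left (sum_range_inv_add_le ha M) (by linarith)).trans_eq
      (by ring)
  have hpow : (b / (b + M)) ^ b ≤ exp ((b - a) / a * b) * r ^ b := by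
    have hbase : b / (b + M) ≤ b / a * r := by
      rw [hr, div_mul_div_cancel₀ ha.ne']
      gcongr
    have hexp : b / a ≤ exp ((b - a) / a) := by
      calc b / a = (b - a) / a + 1 := by field_simp; ring
        _ ≤ _ := add_one_le_exp _
    calc (b / (b + M)) ^ b ≤ (b / a * r) ^ b := by gcongr
      _ = (b / a) ^ b * r ^ b := mul_rpow (by positivity) hr0.le
      _ ≤ exp ((b - a) / a) ^ b * r ^ b := by gcongr
      _ = _ := by rw [← exp_mul]
  have hcancel : r ^ b * r⁻¹ ^ (b - a) = r ^ a := by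
    rw [inv_rpow hr0.le, rpow_sub hr0]
    field_simp
  have hexponent : (b - a) / a * b + (b - a) / a ≤ 1 + 2 / a := by
    rw [show (b - a) / a * b + (b - a) / a = (b - a) * (b + 1) / a by ring,
      show 1 + 2 / a = (a + 2) / a by field_simp]
    gcongr
    nlinarith
  calc (b / (b + M)) ^ b * riseR b M
      ≤ exp ((b - a) / a * b) * r ^ b * (riseR a M * (exp ((b - a) / a) * r⁻¹ ^ (b - a))) := by
        have := riseR_pos hb M
        gcongr
    _ = exp ((b - a) / a * b + (b - a) / a) * (r ^ b * r⁻¹ ^ (b - a)) * riseR a M := by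
        rw [exp_add]; ring
    _ ≤ exp (1 + 2 / a) * (r ^ a * riseR a M) := by
        rw [hcancel, ← mul_assoc]
        have := riseR_pos ha M
        gcongr

theorem factorial_le_exp_one_mul_sqrt_mul_pow {n : ℕ} (hn : n ≠ 0) :
    (n ! : ℝ) ≤ exp 1 * √n * (n / exp 1) ^ n := by
  obtain ⟨k, rfl⟩ : ∃ k, n = k + 1 := ⟨n - 1, by omega⟩
  have h : Stirling.stirlingSeq (k + 1) ≤ exp 1 / √2 :=
    Stirling.stirlingSeq_one ▸ Stirling.stirlingSeq'_antitone (Nat.zero_le k)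
  rw [Stirling.stirlingSeq, div_le_div_iff₀ (by positivity) (by positivity),
    sqrt_mul zero_le_two] at h
  rw [← mul_le_mul_iff_of_pos_right (show (0 : ℝ) < √2 by positivity)]
  linarith [show exp 1 * (√2 * √(k + 1 : ℕ) * ((k + 1 : ℕ) / exp 1) ^ (k + 1)) =
    exp 1 * √(k + 1 : ℕ) * ((k + 1 : ℕ) / exp 1) ^ (k + 1) * √2 by ring]

theorem le_pow_mul_pow_mul_add_choose {b M : ℕ} (hb : b ≠ 0) (hM : M ≠ 0) :
    √(2 * π) / exp 2 * √((b + M) / (b * M)) ≤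
      ((b : ℝ) / (b + M)) ^ b * ((M : ℝ) / (b + M)) ^ M * ((b + M).choose b : ℝ) := by
  have hb0 : (0 : ℝ) < b := by positivity
  have hN := Stirling.le_factorial_stirling (b + M)
  have hbf := factorial_le_exp_one_mul_sqrt_mul_pow hb
  have hMf := factorial_le_exp_one_mul_sqrt_mul_pow hM
  push_cast at hN
  rw [Nat.cast_add_choose]
  calc √(2 * π) / exp 2 * √((b + M) / (b * M))
      = ((b : ℝ) / (b + M)) ^ b * ((M : ℝ) / (b + M)) ^ M *
        (√(2 * π * (b + M)) * ((b + M) / exp 1) ^ (b + M) /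
          ((exp 1 * √b * (b / exp 1) ^ b) * (exp 1 * √M * (M / exp 1) ^ M))) := by
        have hb' : ((b : ℝ) / (b + M)) ^ b * ((b + M) / exp 1) ^ b = (b / exp 1) ^ b := by
          rw [← mul_pow]; field_simp
        have hM' : ((M : ℝ) / (b + M)) ^ M * ((b + M) / exp 1) ^ M = (M / exp 1) ^ M := by
          rw [← mul_pow]; field_simp
        rw [sqrt_div' _ (by positivity), sqrt_mul (by positivity) (b + M), sqrt_mul hb0.le,
          pow_add, show exp 2 = exp 1 * exp 1 by rw [← exp_add]; norm_num]
        field_simp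
        rw [← hb', ← hM']
        ring
    _ ≤ _ := by gcongr

/-- The mass at `M` of the negative binomial law of shape `a` and mean `M`, i.e. with success
probability `M / (a + M)`. -/
noncomputable def nbMassAtMean (a : ℝ) (M : ℕ) : ℝ :=
  (a / (a + M)) ^ a * ((M : ℝ) / (a + M)) ^ M * (riseR a M / M !)

theorem le_nbMassAtMean_natCast {b M : ℕ} (hb : b ≠ 0) (hM : M ≠ 0) :
    √(2 * π) / exp 2 * √(b / (M * (b + M))) ≤ nbMassAtMean b M := by
  have hsqrt : √((b : ℝ) / (M * (b + M))) = b / (b + M) * √((b + M) / (b * M)) := by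
    rw [← sqrt_sq (by positivity : (0 : ℝ) ≤ b / (b + M)), ← sqrt_mul (sq_nonneg _)]
    congr 1
    field_simp
  rw [nbMassAtMean, rpow_natCast, riseR_natCast_div_factorial hb, hsqrt]
  calc √(2 * π) / exp 2 * (b / (b + M) * √((b + M) / (b * M)))
      = b / (b + M) * (√(2 * π) / exp 2 * √((b + M) / (b * M))) := by ring
    _ ≤ b / (b + M) * (((b : ℝ) / (b + M)) ^ b * ((M : ℝ) / (b + M)) ^ M *
          ((b + M).choose b : ℝ)) :=
        mul_le_mul_of_nonneg_left (le_pow_mul_pow_mul_add_choose hb hM) (by positivity)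
    _ = _ := by ring

theorem nbMassAtMean_le_exp_mul {a b : ℝ} (ha : 0 < a) (hab : a ≤ b) (hba : b ≤ a + 1)
    (M : ℕ) :
    nbMassAtMean b M ≤ exp (1 + 2 / a) * nbMassAtMean a M := by
  have hb : 0 < b := ha.trans_le hab
  have hpow : ((M : ℝ) / (b + M)) ^ M ≤ ((M : ℝ) / (a + M)) ^ M :=
    pow_le_pow_left₀ (by positivity)
      (div_le_div_of_nonneg_left (by positivity) (by positivity) (by linarith)) M
  calc nbMassAtMean b M = (b / (b + M)) ^ b * riseR b M * ((M : ℝ) / (b + M)) ^ M / M ! := by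
        rw [nbMassAtMean]; ring
    _ ≤ exp (1 + 2 / a) * ((a / (a + M)) ^ a * riseR a M) * ((M : ℝ) / (a + M)) ^ M / M ! := by
        have := riseR_pos ha M
        gcongr ?_ * ?_ / _
        exact rpow_mul_riseR_le ha hab hba M
    _ = exp (1 + 2 / a) * nbMassAtMean a M := by rw [nbMassAtMean]; ring

theorem le_nbMassAtMean {a : ℝ} (ha : 0 < a) {M : ℕ} (hM : M ≠ 0) :
    √(2 * π) / exp 2 * exp (-(1 + 2 / a)) * √(a / (M * (a + M))) ≤ nbMassAtMean a M := by
  set b := ⌈a⌉₊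
  have hb : b ≠ 0 := (Nat.ceil_pos.mpr ha).ne'
  have hab : a ≤ b := Nat.le_ceil a
  have hsqrt : √(a / (M * (a + M))) ≤ √(b / (M * (b + M))) := by
    refine sqrt_le_sqrt ?_
    rw [div_le_div_iff₀ (by positivity) (by positivity)]
    have hM0 : (0 : ℝ) ≤ M := M.cast_nonneg
    nlinarith [mul_le_mul_of_nonneg_left hab (mul_nonneg hM0 hM0)]
  calc √(2 * π) / exp 2 * exp (-(1 + 2 / a)) * √(a / (M * (a + M)))
      ≤ exp (-(1 + 2 / a)) * (√(2 * π) / exp 2 * √(b / (M * (b + M)))) := by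
        rw [mul_right_comm, mul_comm]
        gcongr
    _ ≤ exp (-(1 + 2 / a)) * (exp (1 + 2 / a) * nbMassAtMean a M) :=
        mul_le_mul_of_nonneg_left ((le_nbMassAtMean_natCast hb hM).trans
          (nbMassAtMean_le_exp_mul ha hab (Nat.ceil_lt_add_one ha.le).le M)) (exp_pos _).le
    _ = nbMassAtMean a M := by rw [← mul_assoc, ← exp_add]; simp

theorem tsum_prod_nbMass_eq {θ : ℝ} (hθ : 0 ≤ θ) (n m : ℕ) :
    ∑' z : Fin n → ℕ, (if ∑ i, z i = 2 * m then ∏ i, nbMass θ n m (z i) else 0) =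
      nbMassAtMean (n * θ) (2 * m) := by
  set p := ((n * θ) / (2 * m + n * θ)) ^ θ
  set q := (2 * m : ℝ) / (2 * m + n * θ)
  have hterm (r : ℕ) : nbMass θ n m r = p * (q ^ r * Ring.multichoose θ r) := by
    rw [nbMass, ← riseR_div_factorial]; ring
  have hsum : ∀ z ∈ finAntidiagonal n (2 * m),
      (if ∑ i, z i = 2 * m then ∏ i, nbMass θ n m (z i) else 0) =
        p ^ n * q ^ (2 * m) * ∏ i, Ring.multichoose θ (z i) := by
    intro z hz
    rw [mem_finAntidiagonal] at hz
    simp only [hz, if_true, hterm, prod_mul_distrib, prod_const, Finset.card_fin,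
      prod_pow_eq_pow_sum, mul_assoc]
  rw [tsum_eq_sum (s := finAntidiagonal n (2 * m)) fun z hz => if_neg (by simpa using hz),
    sum_congr rfl hsum, ← mul_sum, Ring.sum_finAntidiagonal_prod_multichoose, sum_const,
    Finset.card_fin, nsmul_eq_mul, ← riseR_div_factorial, nbMassAtMean,
    ← rpow_mul_natCast (by positivity), mul_comm θ, add_comm (2 * (m : ℝ))]
  push_cast
  ring

theorem sqrt_mul_rpow_le_sqrt_div {θ : ℝ} (hθ : 0 < θ) {n m : ℕ} (hn : 1 ≤ n)
    (hm : 1 ≤ m) (hmn : m ≤ n ^ 3) :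
    √(θ / (2 * (θ + 2))) * (n : ℝ) ^ (-(5 : ℝ) / 2) ≤
      √(n * θ / ((2 * m : ℕ) * (n * θ + (2 * m : ℕ)))) := by
  have hn1 : (1 : ℝ) ≤ n := by exact_mod_cast hn
  have hm1 : (1 : ℝ) ≤ m := by exact_mod_cast hm
  have hm3 : (m : ℝ) ≤ n ^ 3 := by exact_mod_cast hmn
  have hn3 : (n : ℝ) ≤ n ^ 3 := le_self_pow₀ hn1 (by norm_num)
  have hrpow : (n : ℝ) ^ (-(5 : ℝ) / 2) = √(n ^ 5)⁻¹ := by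
    rw [sqrt_eq_rpow, ← rpow_natCast, ← rpow_neg (by positivity), ← rpow_mul (by positivity)]
    norm_num
  rw [hrpow, ← sqrt_mul (by positivity)]
  refine sqrt_le_sqrt ?_
  push_cast
  calc θ / (2 * (θ + 2)) * (n ^ 5 : ℝ)⁻¹ = n * θ / (2 * n ^ 3 * ((θ + 2) * n ^ 3)) := by
        field_simp
    _ ≤ n * θ / (2 * m * (n * θ + 2 * m)) := by
        gcongr
        nlinarith

theorem stmt_11 (θ : ℝ) (hθ : 0 < θ) :
    ∃ C > (0 : ℝ), ∀ n m : ℕ, 1 ≤ n → n ≤ m → m ≤ n ^ 3 →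
      C * (n : ℝ) ^ (-(5 : ℝ) / 2) ≤
        ∑' z : Fin n → ℕ, (if ∑ i, z i = 2 * m then ∏ i, nbMass θ n m (z i) else 0) := by
  refine ⟨√(2 * π) / exp 2 * exp (-(1 + 2 / θ)) * √(θ / (2 * (θ + 2))), by positivity,
    fun n m hn hnm hmn => ?_⟩
  have hθn : θ ≤ n * θ := le_mul_of_one_le_left hθ.le (by exact_mod_cast hn)
  have hexp : exp (-(1 + 2 / θ)) ≤ exp (-(1 + 2 / (n * θ))) := by gcongr
  rw [tsum_prod_nbMass_eq hθ.le]
  refine le_trans ?_ (le_nbMassAtMean (by positivity) (by omega))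
  rw [mul_assoc]
  gcongr
  exact sqrt_mul_rpow_le_sqrt_div hθ hn (hn.trans hnm) hmn
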